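/- arXiv:2208.06508 — 4 statements merged into one kernel-verified Lean document; each statement's English description precedes it below -/
import Mathlib

section
/- Let η be a finite measure on ℝⁿ, m : ℝⁿ → [0,1] be measurable, θ ∈ ℝⁿ, and α ∈ ℝ. Suppose that if α ≥ 0 then ∫ m dη ≤ η({x : ⟨x,θ⟩ ≥ α}), and if α < 0 then ∫ m dη ≥ η({x : ⟨x,θ⟩ ≥ α}). Then ∫ ⟨x,θ⟩ m(x) dη(x) ≤ ∫ ⟨x,θ⟩ 𝟙{⟨x,θ⟩ ≥ α} dη(x). -/
/-!
A bathtub-principle argument. With `S = {α ≤ f}` and `0 ≤ m ≤ 1`, the factors of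
`(f - α) (m - 𝟙_S)` have opposite signs everywhere, so `f m - 𝟙_S f ≤ α (m - 𝟙_S)` pointwise.
Integrating gives `∫ f m - ∫_S f ≤ α (∫ m - μ S)`, and the mass hypothesis, which in either
sign case says `α ∫ m ≤ α μ S`, makes the right-hand side nonpositive.
-/

open MeasureTheory Set

section Bathtub

variable {X : Type*} {f m : X → ℝ} {α : ℝ}

lemma mul_sub_indicator_le_mul_sub_indicator_one {x : X} (hm0 : 0 ≤ m x) (hm1 : m x ≤ 1) :
    f x * m x - {y | α ≤ f y}.indicator f x
      ≤ α * (m x - {y | α ≤ f y}.indicator 1 x) := by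
  by_cases hx : α ≤ f x
  · simp only [indicator_of_mem (show x ∈ {y | α ≤ f y} from hx), Pi.one_apply]
    nlinarith
  · simp only [indicator_of_notMem (show x ∉ {y | α ≤ f y} from hx)]
    nlinarith

variable [MeasurableSpace X] {μ : Measure X}

theorem integral_mul_le_setIntegral_superlevelSet [IsFiniteMeasure μ] (hf : Measurable f)
    (hfi : Integrable f μ) (hm : AEStronglyMeasurable m μ)
    (hm0 : ∀ x, 0 ≤ m x) (hm1 : ∀ x, m x ≤ 1)
    (hmass : α * ∫ x, m x ∂μ ≤ α * μ.real {x | α ≤ f x}) :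
    ∫ x, f x * m x ∂μ ≤ ∫ x in {x | α ≤ f x}, f x ∂μ := by
  set S := {x | α ≤ f x}
  have hS : MeasurableSet S := measurableSet_le measurable_const hf
  have hm_bound : ∀ᵐ x ∂μ, ‖m x‖ ≤ 1 := .of_forall fun x ↦ by
    rw [Real.norm_eq_abs, abs_le]; exact ⟨by linarith [hm0 x], hm1 x⟩
  have hmi : Integrable m μ := .of_bound hm 1 hm_bound
  have hfmi : Integrable (fun x ↦ f x * m x) μ := hfi.mul_bdd hm hm_bound
  have h1Si : Integrable (S.indicator (1 : X → ℝ)) μ := (integrable_const 1).indicator hS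
  have hpointwise : ∫ x, f x * m x - S.indicator f x ∂μ
      ≤ ∫ x, α * (m x - S.indicator 1 x) ∂μ :=
    integral_mono (hfmi.sub (hfi.indicator hS)) ((hmi.sub h1Si).const_mul α)
      fun x ↦ mul_sub_indicator_le_mul_sub_indicator_one (hm0 x) (hm1 x)
  rw [integral_sub hfmi (hfi.indicator hS), integral_indicator hS, integral_const_mul,
    integral_sub hmi h1Si, integral_indicator_one hS] at hpointwise
  linarith

end Bathtub

/-- If `m : ℝⁿ → [0,1]` and `α` is such that the total mass of `m` is dominated by the mass of the
halfspace `{⟨x,θ⟩ ≥ α}` (when `α ≥ 0`, with the reverse inequality when `α < 0`), then the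
`θ`-directional first moment of `m` is dominated by that of the halfspace indicator. -/
theorem stmt1 (n : ℕ) (η : Measure (EuclideanSpace ℝ (Fin n))) [IsFiniteMeasure η]
    (m : EuclideanSpace ℝ (Fin n) → ℝ) (hm_meas : Measurable m)
    (hm0 : ∀ x, 0 ≤ m x) (hm1 : ∀ x, m x ≤ 1)
    (θ : EuclideanSpace ℝ (Fin n)) (α : ℝ)
    (hint : Integrable (fun x => (inner ℝ x θ : ℝ)) η)
    (h1 : 0 ≤ α → ∫ x, m x ∂η ≤ (η {x | α ≤ (inner ℝ x θ : ℝ)}).toReal)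
    (h2 : α < 0 → (η {x | α ≤ (inner ℝ x θ : ℝ)}).toReal ≤ ∫ x, m x ∂η) :
    ∫ x, (inner ℝ x θ : ℝ) * m x ∂η
      ≤ ∫ x in {x | α ≤ (inner ℝ x θ : ℝ)}, (inner ℝ x θ : ℝ) ∂η := by
  refine integral_mul_le_setIntegral_superlevelSet (by fun_prop) hint
    hm_meas.aestronglyMeasurable hm0 hm1 ?_
  rcases le_or_gt 0 α with hα | hα
  · exact mul_le_mul_of_nonneg_left (h1 hα) hα
  · exact mul_le_mul_of_nonpos_left (h2 hα) hα.le
end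

section
/- Let I(s) = Φ'(Φ⁻¹(s)) denote the Gaussian isoperimetric profile, where Φ is the standard Gaussian cumulative distribution function and Φ' the standard Gaussian density. Then for all s ∈ [0,1], I(s) ≥ s(1−s). -/
/-!
The defect `g = Φ' - Φ (1 - Φ)` is even, because `Φ(-x) = 1 - Φ(x)` and `Φ'` is even, so it
suffices to show `g ≥ 0` on `[0, ∞)`. There `g' = Φ' (2Φ - 1 - x) ≤ 0`: the density is at most
`1/√(2π) ≤ 1/2`, so `Φ(x) - Φ(0) ≤ x/2` with `Φ(0) = 1/2`. Since `g → 0` at `∞`, `g` is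
nonnegative, and the claim follows by evaluating at `x = Φ⁻¹(s)` for `0 < s < 1`.
-/

open MeasureTheory

/-- The standard Gaussian density. -/
noncomputable def gaussPDF (x : ℝ) : ℝ := Real.exp (-x ^ 2 / 2) / Real.sqrt (2 * Real.pi)

/-- The standard Gaussian cumulative distribution function. -/
noncomputable def gaussCDF (x : ℝ) : ℝ := ∫ t in Set.Iic x, gaussPDF t

/-- The inverse of the standard Gaussian CDF. -/
noncomputable def gaussCDFInv : ℝ → ℝ := Function.invFun gaussCDF

/-- The Gaussian isoperimetric profile `I(s) = Φ'(Φ⁻¹(s))`, with `I(0) = I(1) = 0`. -/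
noncomputable def isoProfile (s : ℝ) : ℝ :=
  if s = 0 ∨ s = 1 then 0 else gaussPDF (gaussCDFInv s)

open ProbabilityTheory Real Set Filter Topology

lemma gaussPDF_eq_gaussianPDFReal : gaussPDF = gaussianPDFReal 0 1 := by
  ext x
  simp [gaussPDF, gaussianPDFReal, div_eq_inv_mul]

lemma integrable_gaussPDF : Integrable gaussPDF :=
  gaussPDF_eq_gaussianPDFReal ▸ integrable_gaussianPDFReal 0 1

lemma continuous_gaussPDF : Continuous gaussPDF := by
  unfold gaussPDF; fun_prop

lemma gaussPDF_nonneg (x : ℝ) : 0 ≤ gaussPDF x := by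
  unfold gaussPDF; positivity

lemma gaussPDF_neg (x : ℝ) : gaussPDF (-x) = gaussPDF x := by
  simp [gaussPDF]

lemma gaussPDF_le_half (x : ℝ) : gaussPDF x ≤ 1 / 2 := by
  have h2 : 2 ≤ √(2 * π) := Real.le_sqrt_of_sq_le (by nlinarith [pi_gt_three])
  calc gaussPDF x ≤ 1 / √(2 * π) := by
        unfold gaussPDF; gcongr; exact exp_le_one_iff.mpr (by nlinarith [sq_nonneg x])
    _ ≤ 1 / 2 := by gcongr

lemma hasDerivAt_gaussPDF (x : ℝ) : HasDerivAt gaussPDF (-x * gaussPDF x) x := by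
  have h : HasDerivAt (fun y : ℝ => -y ^ 2 / 2) (-x) x :=
    ((hasDerivAt_pow 2 x).neg.div_const 2).congr_deriv (by ring)
  exact (h.exp.div_const _).congr_deriv (by simp only [gaussPDF]; ring)

lemma tendsto_gaussPDF_atTop : Tendsto gaussPDF atTop (𝓝 0) := by
  have h : Tendsto (fun x : ℝ => -x ^ 2 / 2) atTop atBot :=
    (tendsto_neg_atTop_atBot.comp (tendsto_pow_atTop two_ne_zero)).atBot_div_const two_pos
  have := (tendsto_exp_atBot.comp h).div_const (√(2 * π))
  rwa [zero_div] at this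

lemma gaussCDF_eq_cdf : gaussCDF = cdf (gaussianReal 0 1) := by
  ext x
  rw [cdf_eq_real, measureReal_def, gaussianReal_apply_eq_integral _ one_ne_zero,
    ENNReal.toReal_ofReal (setIntegral_nonneg measurableSet_Iic fun t _ =>
      gaussianPDFReal_nonneg _ _ t), gaussCDF, gaussPDF_eq_gaussianPDFReal]

lemma gaussCDF_add_integral_Ioi (x : ℝ) : gaussCDF x + ∫ t in Ioi x, gaussPDF t = 1 := by
  rw [gaussCDF, intervalIntegral.integral_Iic_add_Ioi integrable_gaussPDF.integrableOn
    integrable_gaussPDF.integrableOn, gaussPDF_eq_gaussianPDFReal,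
    integral_gaussianPDFReal_eq_one 0 one_ne_zero]

lemma gaussCDF_neg (x : ℝ) : gaussCDF (-x) = 1 - gaussCDF x := by
  have h : gaussCDF (-x) = ∫ t in Ioi x, gaussPDF t :=
    calc gaussCDF (-x) = ∫ t in Iic (-x), gaussPDF (-t) := by simp only [gaussCDF, gaussPDF_neg]
      _ = ∫ t in Ioi x, gaussPDF t := by rw [integral_comp_neg_Iic, neg_neg]
  linarith [gaussCDF_add_integral_Ioi x]

lemma gaussCDF_zero : gaussCDF 0 = 1 / 2 := by
  linarith [neg_zero (G := ℝ) ▸ gaussCDF_neg 0]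

lemma hasDerivAt_gaussCDF (x : ℝ) : HasDerivAt gaussCDF (gaussPDF x) x := by
  have h : gaussCDF = fun y => gaussCDF 0 + ∫ t in (0 : ℝ)..y, gaussPDF t := by
    ext y
    rw [← intervalIntegral.integral_Iic_sub_Iic integrable_gaussPDF.integrableOn
      integrable_gaussPDF.integrableOn, gaussCDF, gaussCDF]
    ring
  rw [h]
  exact ((continuous_gaussPDF.integral_hasStrictDerivAt 0 x).hasDerivAt).const_add _

lemma differentiable_gaussCDF : Differentiable ℝ gaussCDF :=
  fun x => (hasDerivAt_gaussCDF x).differentiableAt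

lemma two_mul_gaussCDF_sub_one_le {x : ℝ} (hx : 0 ≤ x) : 2 * gaussCDF x - 1 ≤ x := by
  have := image_sub_le_mul_sub_of_deriv_le differentiable_gaussCDF
    (fun y => (hasDerivAt_gaussCDF y).deriv ▸ gaussPDF_le_half y) hx
  rw [gaussCDF_zero] at this
  linarith

lemma tendsto_gaussCDF_atBot : Tendsto gaussCDF atBot (𝓝 0) :=
  gaussCDF_eq_cdf ▸ tendsto_cdf_atBot _

lemma tendsto_gaussCDF_atTop : Tendsto gaussCDF atTop (𝓝 1) :=
  gaussCDF_eq_cdf ▸ tendsto_cdf_atTop _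

lemma gaussCDF_gaussCDFInv {s : ℝ} (hs : s ∈ Ioo 0 1) : gaussCDF (gaussCDFInv s) = s := by
  refine Function.invFun_eq (mem_range_of_exists_le_of_exists_ge
    differentiable_gaussCDF.continuous ?_ ?_)
  · exact (tendsto_gaussCDF_atBot.eventually (eventually_lt_nhds hs.1)).exists.imp fun _ => le_of_lt
  · exact (tendsto_gaussCDF_atTop.eventually (eventually_gt_nhds hs.2)).exists.imp fun _ => le_of_lt

lemma antitoneOn_gaussPDF_sub_gaussCDF_mul_one_sub :
    AntitoneOn (fun x => gaussPDF x - gaussCDF x * (1 - gaussCDF x)) (Ici 0) := by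
  have hderiv : ∀ x, HasDerivAt (fun x => gaussPDF x - gaussCDF x * (1 - gaussCDF x))
      (gaussPDF x * (2 * gaussCDF x - 1 - x)) x := fun x =>
    ((hasDerivAt_gaussPDF x).sub ((hasDerivAt_gaussCDF x).mul
      ((hasDerivAt_gaussCDF x).const_sub 1))).congr_deriv (by ring)
  refine antitoneOn_of_deriv_nonpos (convex_Ici 0)
    (fun x _ => (hderiv x).continuousAt.continuousWithinAt)
    (fun x _ => (hderiv x).differentiableAt.differentiableWithinAt) fun x hx => ?_
  rw [interior_Ici] at hx
  rw [(hderiv x).deriv]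
  exact mul_nonpos_of_nonneg_of_nonpos (gaussPDF_nonneg x)
    (by linarith [two_mul_gaussCDF_sub_one_le (le_of_lt hx)])

lemma gaussCDF_mul_one_sub_le_gaussPDF_of_nonneg {x : ℝ} (hx : 0 ≤ x) :
    gaussCDF x * (1 - gaussCDF x) ≤ gaussPDF x := by
  have hlim : Tendsto (fun y => gaussPDF y - gaussCDF y * (1 - gaussCDF y)) atTop (𝓝 0) := by
    simpa using tendsto_gaussPDF_atTop.sub
      (tendsto_gaussCDF_atTop.mul (tendsto_gaussCDF_atTop.const_sub 1))
  have := le_of_tendsto hlim <| (eventually_ge_atTop x).mono fun y hy =>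
    antitoneOn_gaussPDF_sub_gaussCDF_mul_one_sub hx (hx.trans hy) hy
  linarith

lemma gaussCDF_mul_one_sub_le_gaussPDF (x : ℝ) : gaussCDF x * (1 - gaussCDF x) ≤ gaussPDF x := by
  rcases le_total 0 x with hx | hx
  · exact gaussCDF_mul_one_sub_le_gaussPDF_of_nonneg hx
  · have := gaussCDF_mul_one_sub_le_gaussPDF_of_nonneg (neg_nonneg.mpr hx)
    rw [gaussCDF_neg, gaussPDF_neg] at this
    linarith

/-- The Gaussian isoperimetric profile satisfies `I(s) ≥ s(1-s)` on `[0,1]`. -/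
theorem stmt3 (s : ℝ) (hs : s ∈ Set.Icc (0 : ℝ) 1) : s * (1 - s) ≤ isoProfile s := by
  by_cases hs01 : s = 0 ∨ s = 1
  · rcases hs01 with rfl | rfl <;> simp [isoProfile]
  rw [isoProfile, if_neg hs01]
  obtain ⟨hs0, hs1⟩ := not_or.mp hs01
  calc s * (1 - s) = gaussCDF (gaussCDFInv s) * (1 - gaussCDF (gaussCDFInv s)) := by
        rw [gaussCDF_gaussCDFInv ⟨hs.1.lt_of_ne' hs0, hs.2.lt_of_ne hs1⟩]
    _ ≤ gaussPDF (gaussCDFInv s) := gaussCDF_mul_one_sub_le_gaussPDF _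
end

section
/- Let δ ∈ [0,1] and let X be a random variable taking values in [-1,1] with E[X] = 0, E[X³] = 0, and E[X²] = 1 − e^{-t}, where δ = e^{-t} for some t ≥ 0. Then for any a with |a| < 1, E[|1 + aX|^{2+δ}]^{2/(2+δ)} ≤ 1 + a² = E[(1 + aY)²], where Y is uniform on {−1,1}. -/
/-!
For `2 ≤ p ≤ 3` the fourth derivative of `(1 + u) ^ p` is nonpositive, so for `u ≥ -1` this
function lies below its cubic Taylor polynomial at `0`. Instead of computing the fourth derivative
we integrate Bernoulli's inequality `(1 + u) ^ (p - 2) ≤ 1 + (p - 2) u` twice from `0`.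
Taking `u = a X` and expectations, the odd moments vanish and
`E|1 + aX|^(2+δ) ≤ 1 + (2+δ)(1+δ)/2 · a²(1-δ)`; Bernoulli's inequality for the exponent
`2/(2+δ) ≤ 1` turns the right side, raised to `2/(2+δ)`, into `1 + (1+δ)(1-δ) a² ≤ 1 + a²`.
-/

open MeasureTheory Set

lemma hasDerivAt_one_add_rpow {p : ℝ} (hp : 1 ≤ p) (u : ℝ) :
    HasDerivAt (fun u : ℝ => (1 + u) ^ p) (p * (1 + u) ^ (p - 1)) u := by
  simpa using ((hasDerivAt_id u).const_add 1).rpow_const (Or.inr hp)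

lemma apply_zero_le_of_hasDerivAt_sign {f f' : ℝ → ℝ} {a u : ℝ}
    (hf : ∀ x, HasDerivAt f (f' x) x) (hneg : ∀ x ∈ Ioo a 0, f' x ≤ 0)
    (hpos : ∀ x, 0 < x → 0 ≤ f' x) (hu : a ≤ u) :
    f 0 ≤ f u := by
  have hcont : Continuous f := continuous_iff_continuousAt.2 fun x => (hf x).continuousAt
  rcases le_total 0 u with hu0 | hu0
  · refine monotoneOn_of_hasDerivWithinAt_nonneg (convex_Ici 0) hcont.continuousOn
      (fun x _ => (hf x).hasDerivWithinAt) (fun x hx => hpos x ?_) (mem_Ici.2 le_rfl) hu0 hu0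
    simpa using hx
  · refine antitoneOn_of_hasDerivWithinAt_nonpos (convex_Icc a 0) hcont.continuousOn
      (fun x _ => (hf x).hasDerivWithinAt) (fun x hx => hneg x ?_) ⟨hu, hu0⟩
      ⟨hu.trans hu0, le_rfl⟩ hu0
    simpa using hx

lemma monotoneOn_taylor₂_sub_one_add_rpow {q : ℝ} (hq1 : 1 ≤ q) (hq2 : q ≤ 2) :
    MonotoneOn (fun u : ℝ => 1 + q * u + q * (q - 1) / 2 * u ^ 2 - (1 + u) ^ q) (Ici (-1)) := by
  have hderiv : ∀ u : ℝ,
      HasDerivAt (fun u : ℝ => 1 + q * u + q * (q - 1) / 2 * u ^ 2 - (1 + u) ^ q)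
        (q * (1 + (q - 1) * u - (1 + u) ^ (q - 1))) u := fun u => by
    refine (((((hasDerivAt_id u).const_mul q).const_add 1).add
      ((hasDerivAt_pow 2 u).const_mul (q * (q - 1) / 2))).sub
      (hasDerivAt_one_add_rpow hq1 u)).congr_deriv ?_
    simp only [Nat.cast_ofNat]; ring
  refine monotoneOn_of_hasDerivWithinAt_nonneg (convex_Ici _)
    (fun u _ => (hderiv u).continuousAt.continuousWithinAt)
    (fun u _ => (hderiv u).hasDerivWithinAt) fun u hu => ?_
  rw [interior_Ici, mem_Ioi] at hu
  have := rpow_one_add_le_one_add_mul_self hu.le (by linarith : 0 ≤ q - 1) (by linarith)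
  nlinarith

lemma one_add_rpow_le_taylor₃ {p : ℝ} (hp2 : 2 ≤ p) (hp3 : p ≤ 3) {u : ℝ} (hu : -1 ≤ u) :
    (1 + u) ^ p ≤ 1 + p * u + p * (p - 1) / 2 * u ^ 2 + p * (p - 1) * (p - 2) / 6 * u ^ 3 := by
  set R := fun u : ℝ => 1 + (p - 1) * u + (p - 1) * (p - 1 - 1) / 2 * u ^ 2 - (1 + u) ^ (p - 1)
  have hR : MonotoneOn R (Ici (-1)) :=
    monotoneOn_taylor₂_sub_one_add_rpow (q := p - 1) (by linarith) (by linarith)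
  have hR0 : R 0 = 0 := by simp [R]
  have hderiv : ∀ u : ℝ, HasDerivAt
      (fun u : ℝ => 1 + p * u + p * (p - 1) / 2 * u ^ 2 + p * (p - 1) * (p - 2) / 6 * u ^ 3
        - (1 + u) ^ p) (p * R u) u := fun u => by
    refine ((((((hasDerivAt_id u).const_mul p).const_add 1).add
      ((hasDerivAt_pow 2 u).const_mul (p * (p - 1) / 2))).add
      ((hasDerivAt_pow 3 u).const_mul (p * (p - 1) * (p - 2) / 6))).sub
      (hasDerivAt_one_add_rpow (p := p) (by linarith) u)).congr_deriv ?_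
    simp only [Nat.cast_ofNat, R]; ring
  have hneg : ∀ x ∈ Ioo (-1) 0, p * R x ≤ 0 := fun x hx =>
    mul_nonpos_of_nonneg_of_nonpos (by linarith)
      (hR0 ▸ hR (mem_Ici.2 hx.1.le) (by norm_num) hx.2.le)
  have hpos : ∀ x, 0 < x → 0 ≤ p * R x := fun x hx =>
    mul_nonneg (by linarith) (hR0 ▸ hR (by norm_num) (mem_Ici.2 (by linarith)) hx.le)
  have := apply_zero_le_of_hasDerivAt_sign hderiv hneg hpos hu
  norm_num at this
  linarith

lemma integral_one_add_rpow_le_of_moments {Ω : Type*} [MeasurableSpace Ω] {μ : Measure Ω}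
    [IsProbabilityMeasure μ] {p : ℝ} (hp2 : 2 ≤ p) (hp3 : p ≤ 3) {Y : Ω → ℝ}
    (hY : ∀ᵐ ω ∂μ, -1 ≤ Y ω) (hY1 : Integrable Y μ) (hY2 : Integrable (fun ω => Y ω ^ 2) μ)
    (hY3 : Integrable (fun ω => Y ω ^ 3) μ) :
    ∫ ω, (1 + Y ω) ^ p ∂μ ≤ 1 + p * ∫ ω, Y ω ∂μ + p * (p - 1) / 2 * ∫ ω, Y ω ^ 2 ∂μ
      + p * (p - 1) * (p - 2) / 6 * ∫ ω, Y ω ^ 3 ∂μ := by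
  have h01 : Integrable (fun ω => 1 + p * Y ω) μ := (integrable_const 1).add (hY1.const_mul p)
  have h012 : Integrable (fun ω => 1 + p * Y ω + p * (p - 1) / 2 * Y ω ^ 2) μ :=
    h01.add (hY2.const_mul _)
  have h0123 := h012.add (hY3.const_mul (p * (p - 1) * (p - 2) / 6))
  calc ∫ ω, (1 + Y ω) ^ p ∂μ
      ≤ ∫ ω, (1 + p * Y ω + p * (p - 1) / 2 * Y ω ^ 2 + p * (p - 1) * (p - 2) / 6 * Y ω ^ 3) ∂μ :=
        integral_mono_of_nonneg (hY.mono fun ω h => Real.rpow_nonneg (by linarith) p) h0123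
          (hY.mono fun ω h => one_add_rpow_le_taylor₃ hp2 hp3 h)
    _ = _ := by
        rw [integral_add h012 (hY3.const_mul _), integral_add h01 (hY2.const_mul _),
          integral_add (integrable_const 1) (hY1.const_mul _), integral_const_mul,
          integral_const_mul, integral_const_mul]
        simp

lemma one_add_mul_rpow_two_div_le {δ m : ℝ} (hδ : 0 ≤ δ) (hm : 0 ≤ m) :
    (1 + (2 + δ) * (1 + δ) / 2 * m) ^ (2 / (2 + δ)) ≤ 1 + (1 + δ) * m := calc
  _ ≤ 1 + 2 / (2 + δ) * ((2 + δ) * (1 + δ) / 2 * m) :=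
    rpow_one_add_le_one_add_mul_self
      (by linarith [mul_nonneg (by positivity : (0 : ℝ) ≤ (2 + δ) * (1 + δ) / 2) hm])
      (by positivity)
      ((div_le_one (by linarith)).2 (by linarith))
  _ = 1 + (1 + δ) * m := by field_simp

/-- One-dimensional hypercontractive base case: if `X ∈ [-1,1]` has mean `0`, third moment `0`
and second moment `1 - e^{-t}`, and `δ = e^{-t}`, then for `|a| < 1`,
`E[|1 + aX|^{2+δ}]^{2/(2+δ)} ≤ 1 + a² = E[(1 + aY)²]` with `Y` uniform on `{-1,1}`. -/
theorem stmt7 {Ω : Type*} [MeasurableSpace Ω] (μ : Measure Ω) [IsProbabilityMeasure μ]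
    (X : Ω → ℝ) (hX : AEMeasurable X μ)
    (t δ : ℝ) (ht : 0 ≤ t) (hδ : δ = Real.exp (-t))
    (hrange : ∀ᵐ ω ∂μ, X ω ∈ Set.Icc (-1 : ℝ) 1)
    (h1 : ∫ ω, X ω ∂μ = 0) (h3 : ∫ ω, (X ω) ^ 3 ∂μ = 0)
    (h2 : ∫ ω, (X ω) ^ 2 ∂μ = 1 - Real.exp (-t))
    (a : ℝ) (ha : |a| < 1) :
    (∫ ω, |1 + a * X ω| ^ (2 + δ) ∂μ) ^ (2 / (2 + δ)) ≤ 1 + a ^ 2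
      ∧ 1 + a ^ 2 = ((1 + a * 1) ^ 2 + (1 + a * (-1)) ^ 2) / 2 := by
  refine ⟨?_, by ring⟩
  have hδ0 : 0 ≤ δ := hδ ▸ (Real.exp_pos _).le
  have hδ1 : δ ≤ 1 := hδ ▸ Real.exp_le_one_iff.2 (by linarith)
  have hbound : ∀ᵐ ω ∂μ, |a * X ω| ≤ 1 := hrange.mono fun ω h => by
    rw [abs_mul]; nlinarith [abs_nonneg a, abs_le.2 h]
  have hlow : ∀ᵐ ω ∂μ, -1 ≤ a * X ω := hbound.mono fun ω h => (abs_le.1 h).1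
  have hmom (n : ℕ) : Integrable (fun ω => (a * X ω) ^ n) μ :=
    .of_bound ((hX.const_mul a).pow_const n).aestronglyMeasurable 1 <| hbound.mono fun ω h => by
      simpa [abs_pow] using pow_le_one₀ (abs_nonneg _) h
  have hE : ∫ ω, |1 + a * X ω| ^ (2 + δ) ∂μ ≤ 1 + (2 + δ) * (1 + δ) / 2 * (a ^ 2 * (1 - δ)) := by
    rw [integral_congr_ae <| hlow.mono fun ω h =>
      congrArg (· ^ (2 + δ)) (abs_of_nonneg (by linarith))]
    have := integral_one_add_rpow_le_of_moments (p := 2 + δ) (by linarith) (by linarith) hlow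
      (by simpa using hmom 1) (hmom 2) (hmom 3)
    simp only [mul_pow, integral_const_mul, h1, h2, h3, ← hδ, mul_zero, add_zero] at this
    linarith
  calc (∫ ω, |1 + a * X ω| ^ (2 + δ) ∂μ) ^ (2 / (2 + δ))
      ≤ (1 + (2 + δ) * (1 + δ) / 2 * (a ^ 2 * (1 - δ))) ^ (2 / (2 + δ)) :=
        Real.rpow_le_rpow (integral_nonneg fun ω => by positivity) hE (by positivity)
    _ ≤ 1 + (1 + δ) * (a ^ 2 * (1 - δ)) :=
        one_add_mul_rpow_two_div_le hδ0 (mul_nonneg (sq_nonneg a) (by linarith))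
    _ ≤ 1 + a ^ 2 := by nlinarith [sq_nonneg a, sq_nonneg (δ * a)]
end

section
/- Let x ∈ (−1,1)ⁿ and let Y = (Y₁,...,Yₙ) be a random vector with independent coordinates, where each Yᵢ takes value 1 with probability (1+xᵢ)/2 and −1 with probability (1−xᵢ)/2. For g : {−1,1}ⁿ → ℝ with multilinear extension g, one has g(x) ≥ g(x)² + Σᵢ (1−xᵢ²)(∂ᵢg(x))², provided g takes values in {0,1} on {−1,1}ⁿ. Here ∂ᵢg denotes the partial derivative of the multilinear extension. -/
/-!
Let `Y` be the random sign vector with independent coordinates and `E[Yᵢ] = xᵢ`. Multilinearity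
gives `E[G(Y)] = G(x)` and `E[G(Y)(Yᵢ - xᵢ)] = (1 - xᵢ²) ∂ᵢG(x)`, and `1` together with the
`(Yᵢ - xᵢ) / √(1 - xᵢ²)` is an orthonormal family in `L²(Y)`. Bessel's inequality for `G(Y)`
against this family gives `E[G(Y)²] ≥ G(x)² + ∑ᵢ (1 - xᵢ²) (∂ᵢG(x))²`, and
`E[G(Y)²] = E[G(Y)] = G(x)` because `G(Y) ∈ {0, 1}`.
-/

open Finset

theorem sum_sq_weighted_inner_le {Ω ι : Type*} [Fintype Ω] [Fintype ι] [DecidableEq ι]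
    {w : Ω → ℝ} (hw : ∀ s, 0 ≤ w s) {e : ι → Ω → ℝ}
    (he : ∀ k l, ∑ s, w s * (e k s * e l s) = if k = l then 1 else 0) (g : Ω → ℝ) :
    ∑ k, (∑ s, w s * (g s * e k s)) ^ 2 ≤ ∑ s, w s * (g s * g s) := by
  -- `f ↦ √w · f` embeds `L²(w)` isometrically into Euclidean space
  let emb : (Ω → ℝ) → EuclideanSpace ℝ Ω := fun f => WithLp.toLp 2 fun s => √(w s) * f s
  have inner_emb : ∀ f h, inner ℝ (emb f) (emb h) = ∑ s, w s * (f s * h s) := by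
    intro f h
    refine (PiLp.inner_apply _ _).trans (sum_congr rfl fun s _ => ?_)
    simp only [emb, RCLike.inner_apply, conj_trivial]
    linear_combination (f s * h s) * Real.mul_self_sqrt (hw s)
  have hon : Orthonormal ℝ fun k => emb (e k) :=
    orthonormal_iff_ite.2 fun k l => by rw [inner_emb, he]
  have bessel := hon.sum_inner_products_le (x := emb g) (s := univ)
  rw [← real_inner_self_eq_norm_sq, inner_emb] at bessel
  simpa only [Real.norm_eq_abs, sq_abs, real_inner_comm (emb g), inner_emb] using bessel

lemma one_sub_sq_pos {a : ℝ} (ha : a ∈ Set.Ioo (-1) 1) : 0 < 1 - a ^ 2 :=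
  sub_pos.2 ((sq_lt_one_iff_abs_lt_one a).2 (abs_lt.2 ha))

namespace BiasedCube

variable {ι : Type*} [Fintype ι]

def boolSign (b : Bool) : ℝ := if b then 1 else -1

@[simp] lemma boolSign_true : boolSign true = 1 := rfl
@[simp] lemma boolSign_false : boolSign false = -1 := rfl

lemma boolSign_eq_one_or_eq_neg_one (b : Bool) : boolSign b = 1 ∨ boolSign b = -1 := by
  cases b <;> simp

lemma boolSign_mul_self (b : Bool) : boolSign b * boolSign b = 1 := by
  cases b <;> norm_num

/-- The law of `Y`, with `true` encoding `Yᵢ = 1`: `(1 + xᵢ yᵢ) / 2` is the probability that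
`Yᵢ = yᵢ` when `E[Yᵢ] = xᵢ`. -/
noncomputable def biasedWeight (x : ι → ℝ) (s : ι → Bool) : ℝ :=
  ∏ i, (1 + x i * boolSign (s i)) / 2

lemma biasedWeight_nonneg {x : ι → ℝ} (hx : ∀ i, x i ∈ Set.Icc (-1) 1) (s : ι → Bool) :
    0 ≤ biasedWeight x s :=
  prod_nonneg fun i _ => by
    obtain ⟨h₁, h₂⟩ := hx i
    cases s i <;> simp only [boolSign_true, boolSign_false] <;> linarith

variable [DecidableEq ι]

lemma sum_biasedWeight_mul_prod (x : ι → ℝ) (φ : ι → Bool → ℝ) :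
    ∑ s, biasedWeight x s * ∏ i, φ i (s i)
      = ∏ i, ((1 + x i) / 2 * φ i true + (1 - x i) / 2 * φ i false) := by
  simp only [biasedWeight, ← prod_mul_distrib]
  rw [← Fintype.prod_sum fun i b => (1 + x i * boolSign b) / 2 * φ i b]
  refine prod_congr rfl fun i _ => ?_
  rw [Fintype.sum_bool, boolSign_true, boolSign_false]
  ring

lemma sum_biasedWeight_mul_prod_sign (x : ι → ℝ) (A : Finset ι) :
    ∑ s, biasedWeight x s * ∏ j ∈ A, boolSign (s j) = ∏ j ∈ A, x j := by
  calc ∑ s, biasedWeight x s * ∏ j ∈ A, boolSign (s j)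
      = ∑ s, biasedWeight x s * ∏ j, if j ∈ A then boolSign (s j) else 1 := by
        simp only [Fintype.prod_ite_mem]
    _ = ∏ j, if j ∈ A then x j else 1 := by
        rw [sum_biasedWeight_mul_prod x fun j b => if j ∈ A then boolSign b else 1]
        simp only [boolSign_true, boolSign_false]
        refine prod_congr rfl fun j _ => ?_
        split_ifs <;> ring
    _ = ∏ j ∈ A, x j := Fintype.prod_ite_mem A x

lemma sum_biasedWeight (x : ι → ℝ) : ∑ s, biasedWeight x s = 1 := by
  simpa using sum_biasedWeight_mul_prod_sign x ∅

lemma sum_biasedWeight_mul_prod_sign_mul_sub (x : ι → ℝ) (A : Finset ι) (i : ι) :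
    ∑ s, biasedWeight x s * ((∏ j ∈ A, boolSign (s j)) * (boolSign (s i) - x i))
      = if i ∈ A then (1 - x i ^ 2) * ∏ j ∈ A.erase i, x j else 0 := by
  -- since `Yᵢ² = 1`, both cases reduce to moments of monomials
  split_ifs with hi
  · have key (s : ι → Bool) : (∏ j ∈ A, boolSign (s j)) * (boolSign (s i) - x i)
        = ∏ j ∈ A.erase i, boolSign (s j) - x i * ∏ j ∈ A, boolSign (s j) := by
      rw [← mul_prod_erase A _ hi]
      linear_combination (∏ j ∈ A.erase i, boolSign (s j)) * boolSign_mul_self (s i)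
    rw [sum_congr rfl fun s _ => by rw [key, mul_sub, mul_left_comm (biasedWeight x s) (x i)],
      sum_sub_distrib, ← mul_sum,
      sum_biasedWeight_mul_prod_sign, sum_biasedWeight_mul_prod_sign, ← mul_prod_erase A x hi]
    ring
  · have key (s : ι → Bool) : (∏ j ∈ A, boolSign (s j)) * (boolSign (s i) - x i)
        = ∏ j ∈ insert i A, boolSign (s j) - x i * ∏ j ∈ A, boolSign (s j) := by
      rw [prod_insert hi]
      ring
    rw [sum_congr rfl fun s _ => by rw [key, mul_sub, mul_left_comm (biasedWeight x s) (x i)],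
      sum_sub_distrib, ← mul_sum,
      sum_biasedWeight_mul_prod_sign, sum_biasedWeight_mul_prod_sign, prod_insert hi, sub_self]

lemma sum_biasedWeight_mul_sub (x : ι → ℝ) (i : ι) :
    ∑ s, biasedWeight x s * (boolSign (s i) - x i) = 0 := by
  simpa using sum_biasedWeight_mul_prod_sign_mul_sub x ∅ i

lemma sum_biasedWeight_mul_sub_mul_sub (x : ι → ℝ) (i k : ι) :
    ∑ s, biasedWeight x s * ((boolSign (s i) - x i) * (boolSign (s k) - x k))
      = if i = k then 1 - x i ^ 2 else 0 := by
  have key (s : ι → Bool) : (boolSign (s i) - x i) * (boolSign (s k) - x k)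
      = (∏ j ∈ {k}, boolSign (s j)) * (boolSign (s i) - x i) - x k * (boolSign (s i) - x i) := by
    rw [prod_singleton]
    ring
  rw [sum_congr rfl fun s _ => by rw [key, mul_sub, mul_left_comm (biasedWeight x s) (x k)],
    sum_sub_distrib, ← mul_sum, sum_biasedWeight_mul_prod_sign_mul_sub, sum_biasedWeight_mul_sub,
    mul_zero, sub_zero]
  obtain rfl | h := eq_or_ne i k
  · simp
  · simp [h]

def multilinearEval (c : Finset ι → ℝ) (y : ι → ℝ) : ℝ := ∑ A, c A * ∏ i ∈ A, y i

def multilinearPartial (c : Finset ι → ℝ) (i : ι) (y : ι → ℝ) : ℝ :=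
  ∑ A ∈ univ.filter (fun A => i ∈ A), c A * ∏ j ∈ A.erase i, y j

lemma sum_biasedWeight_mul_multilinearEval_mul (x : ι → ℝ) (c : Finset ι → ℝ)
    (f : (ι → Bool) → ℝ) :
    ∑ s, biasedWeight x s * (multilinearEval c (boolSign ∘ s) * f s)
      = ∑ A, c A * ∑ s, biasedWeight x s * ((∏ j ∈ A, boolSign (s j)) * f s) := by
  simp only [multilinearEval, Function.comp_apply, sum_mul, mul_sum]
  rw [sum_comm]
  exact sum_congr rfl fun A _ => sum_congr rfl fun s _ => by ring

lemma sum_biasedWeight_mul_multilinearEval (x : ι → ℝ) (c : Finset ι → ℝ) :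
    ∑ s, biasedWeight x s * multilinearEval c (boolSign ∘ s) = multilinearEval c x := by
  simpa only [mul_one, sum_biasedWeight_mul_prod_sign, multilinearEval] using
    sum_biasedWeight_mul_multilinearEval_mul x c fun _ => 1

lemma sum_biasedWeight_mul_multilinearEval_mul_sub (x : ι → ℝ) (c : Finset ι → ℝ) (i : ι) :
    ∑ s, biasedWeight x s * (multilinearEval c (boolSign ∘ s) * (boolSign (s i) - x i))
      = (1 - x i ^ 2) * multilinearPartial c i x := by
  rw [sum_biasedWeight_mul_multilinearEval_mul]
  simp only [sum_biasedWeight_mul_prod_sign_mul_sub, mul_ite, mul_zero, multilinearPartial,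
    sum_filter, mul_sum]
  exact sum_congr rfl fun A _ => by split_ifs <;> ring

/-- The biased Fourier characters `χ̃_A` with `|A| ≤ 1`. -/
noncomputable def biasedBasis (x : ι → ℝ) : Option ι → (ι → Bool) → ℝ
  | none, _ => 1
  | some i, s => (boolSign (s i) - x i) / √(1 - x i ^ 2)

lemma biasedBasis_orthonormal {x : ι → ℝ} (hx : ∀ i, x i ∈ Set.Ioo (-1) 1) (k l : Option ι) :
    ∑ s, biasedWeight x s * (biasedBasis x k s * biasedBasis x l s) = if k = l then 1 else 0 := by
  rcases k with _ | i <;> rcases l with _ | k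
  · simp [biasedBasis, sum_biasedWeight]
  · simp [biasedBasis, mul_div_assoc', ← sum_div, sum_biasedWeight_mul_sub]
  · simp [biasedBasis, mul_div_assoc', ← sum_div, sum_biasedWeight_mul_sub]
  · simp only [biasedBasis]
    rw [sum_congr rfl fun s _ => by rw [div_mul_div_comm, mul_div_assoc'], ← sum_div,
      sum_biasedWeight_mul_sub_mul_sub]
    simp only [Option.some.injEq]
    split_ifs with h
    · subst h
      have := one_sub_sq_pos (hx i)
      rw [Real.mul_self_sqrt this.le, div_self this.ne']
    · exact zero_div _

theorem multilinearEval_sq_add_sum_le {c : Finset ι → ℝ}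
    (hc : ∀ s : ι → Bool,
      multilinearEval c (boolSign ∘ s) = 0 ∨ multilinearEval c (boolSign ∘ s) = 1)
    {x : ι → ℝ} (hx : ∀ i, x i ∈ Set.Ioo (-1) 1) :
    multilinearEval c x ^ 2 + ∑ i, (1 - x i ^ 2) * multilinearPartial c i x ^ 2
      ≤ multilinearEval c x := by
  set g : (ι → Bool) → ℝ := fun s => multilinearEval c (boolSign ∘ s)
  have bessel := sum_sq_weighted_inner_le
    (biasedWeight_nonneg fun i => Set.Ioo_subset_Icc_self (hx i)) (biasedBasis_orthonormal hx) g
  have mean_sq : ∑ s, biasedWeight x s * (g s * g s) = multilinearEval c x := by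
    rw [← sum_biasedWeight_mul_multilinearEval]
    refine sum_congr rfl fun s _ => ?_
    rcases hc s with h | h <;> simp [g, h]
  have coeff_sq (i : ι) : (∑ s, biasedWeight x s * (g s * biasedBasis x (some i) s)) ^ 2
      = (1 - x i ^ 2) * multilinearPartial c i x ^ 2 := by
    have := one_sub_sq_pos (hx i)
    simp only [biasedBasis, mul_div_assoc', ← sum_div, g,
      sum_biasedWeight_mul_multilinearEval_mul_sub, div_pow, Real.sq_sqrt this.le]
    field_simp
  have coeff_none :
      ∑ s, biasedWeight x s * (g s * biasedBasis x none s) = multilinearEval c x := by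
    simpa only [biasedBasis, mul_one] using sum_biasedWeight_mul_multilinearEval x c
  rw [Fintype.sum_option, mean_sq, coeff_none] at bessel
  simpa only [coeff_sq] using bessel

end BiasedCube

/-- Biased Parseval inequality: if the multilinear polynomial
`G(x) = ∑_A c(A) ∏_{i∈A} x_i` takes values in `{0,1}` on the Boolean cube `{-1,1}ⁿ`, then for
every `x ∈ (-1,1)ⁿ`, `G(x) ≥ G(x)² + ∑_i (1-x_i²)(∂_i G(x))²`, where
`∂_i G(x) = ∑_{A ∋ i} c(A) ∏_{j ∈ A\{i}} x_j` is the partial derivative of `G`. -/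
theorem stmt11 (n : ℕ) (c : Finset (Fin n) → ℝ) (G : (Fin n → ℝ) → ℝ)
    (hG : ∀ x, G x = ∑ A : Finset (Fin n), c A * ∏ i ∈ A, x i)
    (hBool : ∀ x : Fin n → ℝ, (∀ i, x i = 1 ∨ x i = -1) → G x = 0 ∨ G x = 1)
    (x : Fin n → ℝ) (hx : ∀ i, x i ∈ Set.Ioo (-1 : ℝ) 1) :
    G x ≥ (G x) ^ 2 + ∑ i : Fin n, (1 - (x i) ^ 2) *
      (∑ A ∈ Finset.univ.filter (fun A : Finset (Fin n) => i ∈ A),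
        c A * ∏ j ∈ A.erase i, x j) ^ 2 := by
  obtain rfl : G = BiasedCube.multilinearEval c := funext hG
  exact BiasedCube.multilinearEval_sq_add_sum_le
    (fun s => hBool _ fun i => BiasedCube.boolSign_eq_one_or_eq_neg_one (s i)) hx
end
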